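/- arXiv:2604.04912 — 5 statements merged into one kernel-verified Lean document; each statement's English description precedes it below -/
import Mathlib

section
/- In the graph G constructed by attaching to each vertex x of a base graph an 'independent set gadget' (as in the reduction from Independent Set: vertices x_v for v ∈ V(H), a vertex y_{uv} adjacent to x_u and x_v for each edge uv of H, a vertex α adjacent to all x_v, and a pendant p adjacent to α), the graph G is 2-degenerate: there exists an ordering of V(G) in which every vertex has at most 2 neighbors occurring later in the ordering. -/
/-- The graph of the Independent-Set reduction: vertices `x_v` (`Sum.inl (Sum.inl v)`),
`y_e` for edges `e` of `H` (`Sum.inl (Sum.inr e)`), `α = Sum.inr true`, `p = Sum.inr false`;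
`y_e` is adjacent to `x_u`, `x_v` for `e = uv`, `α` is adjacent to all `x_v` and to `p`. -/
def redGraph {V : Type*} (H : SimpleGraph V) :
    SimpleGraph ((V ⊕ H.edgeSet) ⊕ Bool) :=
  SimpleGraph.fromRel (fun a b =>
    match a, b with
    | Sum.inl (Sum.inr e), Sum.inl (Sum.inl v) => v ∈ (e : Sym2 V)
    | Sum.inr true, Sum.inl (Sum.inl _) => True
    | Sum.inr true, Sum.inr false => True
    | _, _ => False)

/-!
Order the vertices in four layers: the edge vertices `y_e`, then `p`, then the vertices `x_v`,
then `α`. No edge joins two vertices of the same layer, so breaking ties inside a layer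
arbitrarily yields a linear order in which the later neighbours of a vertex are its neighbours
in higher layers: the two ends `x_u, x_v` for `y_e`, and only `α` for `p` and for `x_v`.
-/

namespace SimpleGraph

variable {α : Type*} (G : SimpleGraph α)

theorem exists_injective_ncard_le_of_layering [Finite α] (layer : α → ℕ) (d : ℕ)
    (h_ne : ∀ a b, G.Adj a b → layer a ≠ layer b)
    (h_up : ∀ a, {b | G.Adj a b ∧ layer a < layer b}.ncard ≤ d) :
    ∃ f : α → ℕ, Function.Injective f ∧ ∀ a, {b | G.Adj a b ∧ f a < f b}.ncard ≤ d := by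
  obtain ⟨n, ⟨e⟩⟩ := Finite.exists_equiv_fin α
  set f : α → ℕ := fun a => n * layer a + e a
  have f_lt_of_layer_lt {a b : α} (h : layer a < layer b) : f a < f b :=
    calc f a < n * (layer a + 1) := by simp only [f, Nat.mul_succ]; omega
      _ ≤ n * layer b := Nat.mul_le_mul_left n h
      _ ≤ f b := Nat.le_add_right _ _
  refine ⟨f, fun a b hab => ?_, fun a => ?_⟩
  · rcases lt_trichotomy (layer a) (layer b) with h | h | h
    · exact absurd hab (f_lt_of_layer_lt h).ne
    · exact e.injective (Fin.ext (by simpa [f, h] using hab))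
    · exact absurd hab (f_lt_of_layer_lt h).ne'
  · convert h_up a using 3
    ext b
    refine and_congr_right fun hadj => ⟨fun hf => ?_, f_lt_of_layer_lt⟩
    exact (h_ne a b hadj).lt_or_gt.resolve_right fun h => (f_lt_of_layer_lt h).not_gt hf

end SimpleGraph

section redGraph

variable {V : Type*} (H : SimpleGraph V)

def redLayer : (V ⊕ H.edgeSet) ⊕ Bool → ℕ
  | .inl (.inl _) => 2
  | .inl (.inr _) => 0
  | .inr true => 3
  | .inr false => 1

theorem redLayer_ne_of_adj {a b : (V ⊕ H.edgeSet) ⊕ Bool} (h : (redGraph H).Adj a b) :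
    redLayer H a ≠ redLayer H b := by
  rcases a with (_ | _) | (_ | _) <;> rcases b with (_ | _) | (_ | _) <;>
    simp_all [redGraph, redLayer]

theorem redGraph_upperNeighbors_subset_pair (a : (V ⊕ H.edgeSet) ⊕ Bool) :
    ∃ b₁ b₂, {b | (redGraph H).Adj a b ∧ redLayer H a < redLayer H b} ⊆ {b₁, b₂} := by
  rcases a with (v | ⟨e, -⟩) | b
  · refine ⟨.inr true, .inr true, ?_⟩
    rintro ((_ | _) | (_ | _)) h <;> simp_all [redGraph, redLayer]
  · induction e using Sym2.ind with
    | _ u w =>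
      refine ⟨.inl (.inl u), .inl (.inl w), ?_⟩
      rintro ((_ | _) | (_ | _)) h <;> simp_all [redGraph, redLayer]
  · refine ⟨.inr true, .inr true, ?_⟩
    cases b <;> rintro ((_ | _) | (_ | _)) h <;> simp_all [redGraph, redLayer]

theorem ncard_redGraph_upperNeighbors_le_two (a : (V ⊕ H.edgeSet) ⊕ Bool) :
    {b | (redGraph H).Adj a b ∧ redLayer H a < redLayer H b}.ncard ≤ 2 := by
  obtain ⟨b₁, b₂, hsub⟩ := redGraph_upperNeighbors_subset_pair H a
  calc _ ≤ ({b₁, b₂} : Set _).ncard := Set.ncard_le_ncard hsub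
    _ ≤ ({b₂} : Set _).ncard + 1 := Set.ncard_insert_le _ _
    _ = 2 := by rw [Set.ncard_singleton]

end redGraph

theorem stmt5_general {V : Type*} [Fintype V] (H : SimpleGraph V) :
    ∃ f : ((V ⊕ H.edgeSet) ⊕ Bool) → ℕ, Function.Injective f ∧
      ∀ a, {b | (redGraph H).Adj a b ∧ f a < f b}.ncard ≤ 2 :=
  (redGraph H).exists_injective_ncard_le_of_layering (redLayer H) 2
    (fun _ _ => redLayer_ne_of_adj H) (ncard_redGraph_upperNeighbors_le_two H)

/-- The reduction graph is 2-degenerate: there is an ordering of the vertices in which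
every vertex has at most 2 neighbors occurring later in the ordering. -/
theorem stmt5 {V : Type*} [Fintype V] [DecidableEq V] (H : SimpleGraph V)
    [DecidableRel H.Adj] :
    ∃ f : ((V ⊕ H.edgeSet) ⊕ Bool) → ℕ, Function.Injective f ∧
      ∀ a, {b | (redGraph H).Adj a b ∧ f a < f b}.ncard ≤ 2 :=
  stmt5_general H
end

section
/- Let H be a graph and r ≥ 1, and let G be the graph of the Independent-Set reduction (vertices x_v for v ∈ V(H), y_{uv} adjacent to x_u, x_v for each edge uv, a vertex α adjacent to all x_v with quota ⟨r,r⟩, a pendant p adjacent to α with quota ⟨0,0⟩, all x_v and y_{uv} with quota ⟨0,1⟩). Then H has an independent set of size r if and only if G has a set S of size at most r with lo(v) ≤ |N[v] ∩ S| ≤ up(v) for all v ∈ V(G). -/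
/-- Lower quotas: `lo(x_v) = lo(y_e) = 0`, `lo(α) = r`, `lo(p) = 0`. -/
def loQ {V : Type*} (H : SimpleGraph V) (r : ℕ) : ((V ⊕ H.edgeSet) ⊕ Bool) → ℕ
  | Sum.inr true => r
  | _ => 0

/-- Upper quotas: `up(x_v) = up(y_e) = 1`, `up(α) = r`, `up(p) = 0`. -/
def upQ {V : Type*} (H : SimpleGraph V) (r : ℕ) : ((V ⊕ H.edgeSet) ⊕ Bool) → ℕ
  | Sum.inl _ => 1
  | Sum.inr true => r
  | Sum.inr false => 0

/-!
An independent set `I` of `H` gives `S = {x_v | v ∈ I}`: the hub `α` sees all of `S`, no `x_v`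
sees another `x_w`, and `y_uv` sees at most one of `x_u`, `x_v` because `u`, `v` are not both
in `I`. Conversely, the quota `⟨0,0⟩` of the pendant `p` keeps both `p` and `α` out of `S`, so
`N[α] ∩ S` consists of the `x_v ∈ S` and the quota of `α` says there are exactly `r` of them;
two adjacent such `u`, `v` would put two vertices of `S` into `N[y_uv]`.
-/

open Set

def SimpleGraph.ProperlyDominates {W : Type*} (G : SimpleGraph W) (lo up : W → ℕ)
    (S : Set W) : Prop :=
  ∀ a, lo a ≤ (insert a (G.neighborSet a) ∩ S).ncard ∧
    (insert a (G.neighborSet a) ∩ S).ncard ≤ up a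

theorem SimpleGraph.IsIndepSet.ncard_pair_inter_le_one {W : Type*} {G : SimpleGraph W}
    {I : Set W} (hI : G.IsIndepSet I) {u v : W} (h : G.Adj u v) :
    ({u, v} ∩ I).ncard ≤ 1 := by
  refine (ncard_le_one_iff_subsingleton).2 ?_
  rintro a ⟨ha, haI⟩ b ⟨hb, hbI⟩
  by_contra hab
  rcases ha with rfl | rfl <;> rcases hb with rfl | rfl
  exacts [hab rfl, hI haI hbI hab h, hI haI hbI hab h.symm, hab rfl]

theorem SimpleGraph.isIndepSet_iff_forall_not_adj {W : Type*} {G : SimpleGraph W}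
    {I : Set W} : G.IsIndepSet I ↔ ∀ u ∈ I, ∀ v ∈ I, ¬G.Adj u v :=
  ⟨fun hI _ hu _ hv h => hI hu hv h.ne h, fun hI _ hu _ hv _ => hI _ hu _ hv⟩

namespace RedGraph

variable {V : Type*} (H : SimpleGraph V)

abbrev x (v : V) : (V ⊕ H.edgeSet) ⊕ Bool := .inl (.inl v)

abbrev y {H : SimpleGraph V} (e : H.edgeSet) : (V ⊕ H.edgeSet) ⊕ Bool := .inl (.inr e)

abbrev alpha : (V ⊕ H.edgeSet) ⊕ Bool := .inr true

abbrev pendant : (V ⊕ H.edgeSet) ⊕ Bool := .inr false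

theorem x_injective : Function.Injective (x H) := fun _ _ h => by simpa using h

theorem not_adj_x_x (u v : V) : ¬(redGraph H).Adj (x H u) (x H v) := by
  simp [redGraph]

variable {H} in
theorem neighborSet_y_mk {u v : V} (h : s(u, v) ∈ H.edgeSet) :
    (redGraph H).neighborSet (y ⟨s(u, v), h⟩) = {x H u, x H v} := by
  ext ((w | e) | _ | _) <;> simp [redGraph]

theorem neighborSet_alpha :
    (redGraph H).neighborSet (alpha H) = insert (pendant H) (range (x H)) := by
  ext ((w | e) | _ | _) <;> simp [redGraph]

theorem neighborSet_pendant : (redGraph H).neighborSet (pendant H) = {alpha H} := by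
  ext ((w | e) | _ | _) <;> simp [redGraph]

variable {H}

theorem properlyDominates_image_x {I : Set V} (hI : H.IsIndepSet I) :
    (redGraph H).ProperlyDominates (loQ H I.ncard) (upQ H I.ncard) (x H '' I) := by
  rintro ((v | ⟨⟨u, w⟩, huw⟩) | _ | _)
  · refine ⟨Nat.zero_le _, ?_⟩
    have hsub : insert (x H v) ((redGraph H).neighborSet (x H v)) ∩ x H '' I ⊆ {x H v} := by
      rintro _ ⟨h | h, ⟨t, -, rfl⟩⟩
      exacts [h, absurd h (not_adj_x_x H v t)]
    exact (ncard_le_ncard hsub).trans (ncard_singleton _).le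
  · refine ⟨Nat.zero_le _, ?_⟩
    have hsub : insert (y ⟨s(u, w), huw⟩) ((redGraph H).neighborSet (y ⟨s(u, w), huw⟩)) ∩
        x H '' I ⊆ x H '' ({u, w} ∩ I) := by
      rw [neighborSet_y_mk]
      rintro _ ⟨h | h, ⟨t, ht, rfl⟩⟩
      · simp at h
      · exact ⟨t, ⟨by simpa using h, ht⟩, rfl⟩
    calc _ ≤ (x H '' ({u, w} ∩ I)).ncard := ncard_le_ncard hsub
      _ = ({u, w} ∩ I).ncard := ncard_image_of_injective _ (x_injective H)
      _ ≤ 1 := hI.ncard_pair_inter_le_one (H.mem_edgeSet.1 huw)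
  · have hempty : insert (pendant H) ((redGraph H).neighborSet (pendant H)) ∩ x H '' I = ∅ := by
      rw [neighborSet_pendant, eq_empty_iff_forall_notMem]
      rintro _ ⟨h | h, ⟨t, -, rfl⟩⟩ <;> simp at h
    simp [hempty, loQ, upQ]
  · have heq : insert (alpha H) ((redGraph H).neighborSet (alpha H)) ∩ x H '' I = x H '' I := by
      rw [inter_eq_right, neighborSet_alpha]
      rintro _ ⟨t, -, rfl⟩
      simp
    rw [heq, ncard_image_of_injective _ (x_injective H)]
    exact ⟨le_rfl, le_rfl⟩

variable {r : ℕ} {S : Set ((V ⊕ H.edgeSet) ⊕ Bool)}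

theorem alpha_notMem_and_pendant_notMem
    (hS : (redGraph H).ProperlyDominates (loQ H r) (upQ H r) S) :
    alpha H ∉ S ∧ pendant H ∉ S := by
  have hp := Nat.le_zero.1 (hS (pendant H)).2
  rw [neighborSet_pendant, ncard_eq_zero, eq_empty_iff_forall_notMem] at hp
  exact ⟨fun h => hp _ ⟨by simp, h⟩, fun h => hp _ ⟨by simp, h⟩⟩

theorem image_preimage_x (hS : (redGraph H).ProperlyDominates (loQ H r) (upQ H r) S) :
    x H '' (x H ⁻¹' S) = insert (alpha H) ((redGraph H).neighborSet (alpha H)) ∩ S := by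
  obtain ⟨hα, hp⟩ := alpha_notMem_and_pendant_notMem hS
  rw [neighborSet_alpha]
  ext ((v | e) | _ | _) <;> simp [hα, hp]

theorem ncard_preimage_x (hS : (redGraph H).ProperlyDominates (loQ H r) (upQ H r) S) :
    (x H ⁻¹' S).ncard = r := by
  rw [← ncard_image_of_injective _ (x_injective H), image_preimage_x hS]
  exact le_antisymm (hS (alpha H)).2 (hS (alpha H)).1

theorem isIndepSet_preimage_x (hS : (redGraph H).ProperlyDominates (loQ H r) (upQ H r) S) :
    H.IsIndepSet (x H ⁻¹' S) := by
  intro u hu v hv huv hadj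
  have he : s(u, v) ∈ H.edgeSet := hadj
  have hy := (hS (y ⟨s(u, v), he⟩)).2
  rw [neighborSet_y_mk] at hy
  have hsub : {x H u, x H v} ⊆ insert (y ⟨s(u, v), he⟩) {x H u, x H v} ∩ S := by
    rintro _ (rfl | rfl)
    exacts [⟨by simp, hu⟩, ⟨by simp, hv⟩]
  have := calc 2 = ({x H u, x H v} : Set _).ncard := (ncard_pair ((x_injective H).ne huv)).symm
    _ ≤ _ := ncard_le_ncard hsub
    _ ≤ 1 := hy
  omega

end RedGraph

theorem stmt6_general {V : Type*} (H : SimpleGraph V) (r : ℕ) :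
    (∃ I : Set V, I.ncard = r ∧ ∀ u ∈ I, ∀ v ∈ I, ¬H.Adj u v) ↔
    (∃ S : Set ((V ⊕ H.edgeSet) ⊕ Bool), S.ncard ≤ r ∧
      ∀ a, loQ H r a ≤ ({b | b = a ∨ (redGraph H).Adj a b} ∩ S).ncard ∧
        ({b | b = a ∨ (redGraph H).Adj a b} ∩ S).ncard ≤ upQ H r a) := by
  simp_rw [← SimpleGraph.isIndepSet_iff_forall_not_adj]
  constructor
  · rintro ⟨I, rfl, hI⟩
    exact ⟨RedGraph.x H '' I, (ncard_image_of_injective _ (RedGraph.x_injective H)).le,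
      RedGraph.properlyDominates_image_x hI⟩
  · rintro ⟨S, -, hS⟩
    exact ⟨RedGraph.x H ⁻¹' S, RedGraph.ncard_preimage_x hS, RedGraph.isIndepSet_preimage_x hS⟩

/-- `H` has an independent set of size `r` iff the reduction graph has a set `S` of size at
most `r` with `lo(v) ≤ |N[v] ∩ S| ≤ up(v)` for every vertex `v`. -/
theorem stmt6 {V : Type*} [Fintype V] [DecidableEq V] (H : SimpleGraph V)
    [DecidableRel H.Adj] (r : ℕ) (hr : 1 ≤ r) :
    (∃ I : Set V, I.ncard = r ∧ ∀ u ∈ I, ∀ v ∈ I, ¬H.Adj u v) ↔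
    (∃ S : Set ((V ⊕ H.edgeSet) ⊕ Bool), S.ncard ≤ r ∧
      ∀ a, loQ H r a ≤ ({b | b = a ∨ (redGraph H).Adj a b} ∩ S).ncard ∧
        ({b | b = a ∨ (redGraph H).Adj a b} ∩ S).ncard ≤ upQ H r a) :=
  stmt6_general H r
end

section
/- If a vertex w in a graph G has at least k+1 pendant neighbors, each with lower and upper quota equal to 1, then every set S of size at most k that properly dominates G contains w and contains none of these pendants. -/
/-!
A pendant `p` of `w` has closed neighbourhood `{p, w}`, so quota `1` at `p` says that `S` contains
exactly one of `p` and `w`. If `w ∉ S`, all `k + 1` pendants lie in `S`, which is too many; once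
`w ∈ S`, no pendant can lie in `S` as well.
-/

lemma SimpleGraph.closedNbhd_eq_pair_of_pendant {V : Type*} (G : SimpleGraph V) {w p : V}
    (hadj : G.Adj w p) (huniq : ∀ u, G.Adj p u → u = w) :
    {u | u = p ∨ G.Adj p u} = {p, w} := by
  ext u
  simp only [Set.mem_ofPred_eq, Set.mem_insert_iff, Set.mem_singleton_iff]
  exact or_congr_right ⟨huniq u, fun h => h ▸ hadj.symm⟩

namespace Set

variable {α : Type*} {a b : α} {s : Set α}

lemma mem_of_ncard_pair_inter_pos (hb : b ∉ s) (h : 0 < ({a, b} ∩ s).ncard) : a ∈ s := by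
  obtain ⟨x, rfl | rfl, hx⟩ := nonempty_of_ncard_ne_zero h.ne'
  · exact hx
  · exact absurd hx hb

lemma ncard_pair_inter_of_mem (ha : a ∈ s) (hb : b ∈ s) (hab : a ≠ b) :
    ({a, b} ∩ s).ncard = 2 := by
  rw [inter_eq_left.2 (pair_subset ha hb), ncard_pair hab]

end Set

/-- If a vertex `w` has at least `k+1` pendant neighbors (degree-1 vertices whose unique
neighbor is `w`), each with lower and upper quota equal to 1, then every set `S` of size at
most `k` that properly quota-dominates `G` contains `w` and contains none of these pendants. -/
theorem stmt8 {V : Type*} [Fintype V] (G : SimpleGraph V) (lo up : V → ℕ) (k : ℕ)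
    (w : V) (P : Set V) (hP : k + 1 ≤ P.ncard)
    (hpend : ∀ p ∈ P, G.Adj w p ∧ (∀ u, G.Adj p u → u = w) ∧ lo p = 1 ∧ up p = 1)
    (S : Set V) (hS : S.ncard ≤ k)
    (hdom : ∀ v : V, lo v ≤ ({u | u = v ∨ G.Adj v u} ∩ S).ncard ∧
      ({u | u = v ∨ G.Adj v u} ∩ S).ncard ≤ up v) :
    w ∈ S ∧ ∀ p ∈ P, p ∉ S := by
  have hN : ∀ p ∈ P, {u | u = p ∨ G.Adj p u} = {p, w} := fun p hp =>
    G.closedNbhd_eq_pair_of_pendant (hpend p hp).1 (hpend p hp).2.1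
  have hw : w ∈ S := by
    by_contra hw
    have hPS : P ⊆ S := fun p hp => by
      have hlo := (hdom p).1
      rw [hN p hp, (hpend p hp).2.2.1] at hlo
      exact Set.mem_of_ncard_pair_inter_pos hw hlo
    have := Set.ncard_le_ncard hPS
    omega
  refine ⟨hw, fun p hp hpS => ?_⟩
  have hup := (hdom p).2
  rw [hN p hp, (hpend p hp).2.2.2, Set.ncard_pair_inter_of_mem hpS hw (hpend p hp).1.ne'] at hup
  omega
end

section
/- Let G be a graph with quota functions lo, up, and let v be a vertex such that every vertex at distance at most 2 from v (including v itself) has lower quota 0. Then G has a properly quota-dominating set of size at most k if and only if G − v (with quotas restricted to V(G)\{v}) has one. -/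
/-!
Deleting `v` only loses domination from `v` itself, and only neighbours of `v` can feel that
loss; their lower quotas are `0`, so a solution of `G` restricts to one of `G - v`. Conversely,
a solution `S` of `G - v` is lifted to `G` by discarding `N[v]` from `S`: then `v` is dominated
by nothing, which respects its quotas, and a vertex losing a dominator lies within distance
`2` of `v`, so it has lower quota `0`, while upper quotas survive shrinking `S`.
-/

namespace SimpleGraph

variable {V : Type*} (G : SimpleGraph V)

def IsProperDominating (lo up : V → ℕ) (S : Set V) : Prop :=
  ∀ w, lo w ≤ ({u | u = w ∨ G.Adj w u} ∩ S).ncard ∧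
    ({u | u = w ∨ G.Adj w u} ∩ S).ncard ≤ up w

theorem image_val_closedNbhd_induce_inter (s : Set V) (w : s) (S : Set s) :
    Subtype.val '' ({u | u = w ∨ (G.induce s).Adj w u} ∩ S) =
      {u | u = w.val ∨ G.Adj w u} ∩ Subtype.val '' S := by
  ext u
  constructor
  · rintro ⟨x, ⟨hx | hx, hxS⟩, rfl⟩
    · exact ⟨Or.inl (congrArg _ hx), x, hxS, rfl⟩
    · exact ⟨Or.inr hx, x, hxS, rfl⟩
  · rintro ⟨hu | hu, x, hxS, rfl⟩
    · exact ⟨x, ⟨Or.inl (Subtype.ext hu), hxS⟩, rfl⟩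
    · exact ⟨x, ⟨Or.inr hu, hxS⟩, rfl⟩

theorem ncard_closedNbhd_induce_inter (s : Set V) (w : s) (S : Set s) :
    ({u | u = w ∨ (G.induce s).Adj w u} ∩ S).ncard =
      ({u | u = w.val ∨ G.Adj w u} ∩ Subtype.val '' S).ncard := by
  rw [← image_val_closedNbhd_induce_inter, Set.ncard_image_of_injective _ Subtype.val_injective]

variable [Finite V] {G} {lo up : V → ℕ} {v : V}

theorem IsProperDominating.induce_ne {S : Set V} (hS : G.IsProperDominating lo up S)
    (hv : ∀ w, G.Adj v w → lo w = 0) :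
    (G.induce {u | u ≠ v}).IsProperDominating (fun w ↦ lo w) (fun w ↦ up w)
      (Subtype.val ⁻¹' S) := by
  intro w
  rw [ncard_closedNbhd_induce_inter, Set.image_preimage_eq_inter_range, Subtype.range_coe]
  refine ⟨?_, (Set.ncard_le_ncard (by grind)).trans (hS w).2⟩
  by_cases hvw : G.Adj v w
  · simp [hv w hvw]
  · -- `v ∉ N[w]`, so intersecting with `{u | u ≠ v}` changes nothing
    convert (hS w).1 using 2
    ext u
    have : u = v → ¬(u = w.val ∨ G.Adj w u) := by
      rintro rfl (h | h)
      exacts [w.2 h.symm, hvw h.symm]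
    grind

theorem IsProperDominating.of_induce_ne {S : Set {u | u ≠ v}}
    (hS : (G.induce {u | u ≠ v}).IsProperDominating (fun w ↦ lo w) (fun w ↦ up w) S)
    (hv : ∀ w, (w = v ∨ G.Adj v w ∨ ∃ u, G.Adj v u ∧ G.Adj u w) → lo w = 0) :
    G.IsProperDominating lo up (Subtype.val '' S \ {u | u = v ∨ G.Adj v u}) := by
  intro w
  by_cases hwv : w = v
  · subst hwv
    simp [hv w (Or.inl rfl)]
  have hle := (hS ⟨w, hwv⟩).2
  rw [ncard_closedNbhd_induce_inter] at hle
  refine ⟨?_, (Set.ncard_le_ncard (Set.inter_subset_inter_right _ Set.sdiff_subset)).trans hle⟩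
  by_cases hlo : lo w = 0
  · simp [hlo]
  · -- `w` is at distance at least `3` from `v`, so `N[w]` and `N[v]` are disjoint
    have hdisj : ∀ u, (u = w ∨ G.Adj w u) → ¬(u = v ∨ G.Adj v u) := by
      rintro u (rfl | hwu) (rfl | hvu)
      exacts [hwv rfl, hlo (hv _ (.inr (.inl hvu))), hlo (hv _ (.inr (.inl hwu.symm))),
        hlo (hv w (.inr (.inr ⟨u, hvu, hwu.symm⟩)))]
    have hge := (hS ⟨w, hwv⟩).1
    rw [ncard_closedNbhd_induce_inter] at hge
    convert hge using 2
    ext u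
    have := hdisj u
    grind

end SimpleGraph

theorem stmt10_general {V : Type*} [Fintype V] (G : SimpleGraph V)
    (lo up : V → ℕ) (k : ℕ) (v : V)
    (hv : ∀ w : V, (w = v ∨ G.Adj v w ∨ ∃ u, G.Adj v u ∧ G.Adj u w) → lo w = 0) :
    (∃ S : Set V, S.ncard ≤ k ∧
      ∀ w : V, lo w ≤ ({u | u = w ∨ G.Adj w u} ∩ S).ncard ∧
        ({u | u = w ∨ G.Adj w u} ∩ S).ncard ≤ up w) ↔
    (∃ S : Set ↥{u : V | u ≠ v}, S.ncard ≤ k ∧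
      ∀ w : ↥{u : V | u ≠ v},
        lo w.val ≤ ({u | u = w ∨ (G.induce {u : V | u ≠ v}).Adj w u} ∩ S).ncard ∧
        ({u | u = w ∨ (G.induce {u : V | u ≠ v}).Adj w u} ∩ S).ncard ≤ up w.val) := by
  constructor
  · rintro ⟨S, hSk, hS⟩
    refine ⟨Subtype.val ⁻¹' S, ?_,
      SimpleGraph.IsProperDominating.induce_ne hS fun w h ↦ hv w (.inr (.inl h))⟩
    rw [← Set.ncard_image_of_injective _ Subtype.val_injective]
    exact (Set.ncard_le_ncard (Set.image_preimage_subset _ _)).trans hSk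
  · rintro ⟨S, hSk, hS⟩
    refine ⟨_, ?_, SimpleGraph.IsProperDominating.of_induce_ne hS hv⟩
    rw [← Set.ncard_image_of_injective S Subtype.val_injective] at hSk
    exact (Set.ncard_le_ncard Set.sdiff_subset).trans hSk

/-- Reduction rule: if every vertex at distance at most 2 from `v` (including `v`) has
lower quota 0, then `G` has a properly quota-dominating set of size at most `k` iff
`G - v` (with restricted quotas) has one. -/
theorem stmt10 {V : Type*} [Fintype V] [DecidableEq V] (G : SimpleGraph V)
    (lo up : V → ℕ) (k : ℕ) (v : V)
    (hv : ∀ w : V, (w = v ∨ G.Adj v w ∨ ∃ u, G.Adj v u ∧ G.Adj u w) → lo w = 0) :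
    (∃ S : Set V, S.ncard ≤ k ∧
      ∀ w : V, lo w ≤ ({u | u = w ∨ G.Adj w u} ∩ S).ncard ∧
        ({u | u = w ∨ G.Adj w u} ∩ S).ncard ≤ up w) ↔
    (∃ S : Set ↥{u : V | u ≠ v}, S.ncard ≤ k ∧
      ∀ w : ↥{u : V | u ≠ v},
        lo w.val ≤ ({u | u = w ∨ (G.induce {u : V | u ≠ v}).Adj w u} ∩ S).ncard ∧
        ({u | u = w ∨ (G.induce {u : V | u ≠ v}).Adj w u} ∩ S).ncard ≤ up w.val) :=
  stmt10_general G lo up k v hv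
end

section
/- If three vertices p1, p2, p3 lie (in that order) along an induced path of a graph G such that p2 separates p1 from p3 (every path from p1 to p3 passes through p2), then in any minor model ψ of a complete graph in G, p1, p2, p3 cannot belong to three pairwise distinct branch sets. -/
/-! The branch sets of `p1` and `p3` are adjacent, so their union induces a connected subgraph
and contains a walk from `p1` to `p3`; the separator `p2` lies on that walk, hence in one of
these two branch sets, contradicting disjointness from the branch set of `p2`. -/

namespace SimpleGraph

variable {V : Type*} {G : SimpleGraph V}

theorem Preconnected.exists_walk_support_subset_of_induce {s : Set V}
    (h : (G.induce s).Preconnected) {u v : V} (hu : u ∈ s) (hv : v ∈ s) :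
    ∃ w : G.Walk u v, ∀ x ∈ w.support, x ∈ s := by
  obtain ⟨w⟩ := h ⟨u, hu⟩ ⟨v, hv⟩
  refine ⟨w.map (Embedding.induce s).toHom, fun x hx => ?_⟩
  obtain ⟨y, -, rfl⟩ := List.mem_map.mp (Walk.support_map _ w ▸ hx)
  exact y.2

end SimpleGraph

theorem stmt15_general {V : Type*} {ι : Type*} (G : SimpleGraph V) (ψ : ι → Set V)
    (hdisj : ∀ i j : ι, i ≠ j → Disjoint (ψ i) (ψ j))
    (hconn : ∀ i, (G.induce (ψ i)).Connected)
    (hadj : ∀ i j : ι, i ≠ j → ∃ a ∈ ψ i, ∃ b ∈ ψ j, G.Adj a b)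
    (p1 p2 p3 : V)
    (hsep : ∀ w : G.Walk p1 p3, p2 ∈ w.support) :
    ¬∃ q1 q2 q3 : ι, q1 ≠ q2 ∧ q2 ≠ q3 ∧ q1 ≠ q3 ∧
      p1 ∈ ψ q1 ∧ p2 ∈ ψ q2 ∧ p3 ∈ ψ q3 := by
  rintro ⟨q1, q2, q3, hq12, hq23, hq13, hp1, hp2, hp3⟩
  obtain ⟨a, ha, b, hb, hab⟩ := hadj q1 q3 hq13
  have hunion : (G.induce (ψ q1 ∪ ψ q3)).Connected :=
    G.connected_induce_union (hconn q1).preconnected (hconn q3).preconnected ha hb hab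
  obtain ⟨w, hw⟩ :=
    hunion.preconnected.exists_walk_support_subset_of_induce (Or.inl hp1) (Or.inr hp3)
  rcases hw p2 (hsep w) with h | h
  · exact (hdisj q1 q2 hq12).ne_of_mem h hp2 rfl
  · exact (hdisj q2 q3 hq23).ne_of_mem hp2 h rfl

/-- If `p2` separates `p1` from `p3` (every walk from `p1` to `p3` passes through `p2`),
then in any minor model `ψ` of a complete graph in `G` (pairwise disjoint connected branch
sets, every two of which are joined by an edge), the vertices `p1, p2, p3` cannot lie in
three pairwise distinct branch sets. -/
theorem stmt15 {V : Type*} {ι : Type*} (G : SimpleGraph V) (ψ : ι → Set V)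
    (hdisj : ∀ i j : ι, i ≠ j → Disjoint (ψ i) (ψ j))
    (hconn : ∀ i, (G.induce (ψ i)).Connected)
    (hadj : ∀ i j : ι, i ≠ j → ∃ a ∈ ψ i, ∃ b ∈ ψ j, G.Adj a b)
    (p1 p2 p3 : V) (h12 : p1 ≠ p2) (h23 : p2 ≠ p3) (h13 : p1 ≠ p3)
    (hsep : ∀ w : G.Walk p1 p3, p2 ∈ w.support) :
    ¬∃ q1 q2 q3 : ι, q1 ≠ q2 ∧ q2 ≠ q3 ∧ q1 ≠ q3 ∧
      p1 ∈ ψ q1 ∧ p2 ∈ ψ q2 ∧ p3 ∈ ψ q3 :=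
  stmt15_general G ψ hdisj hconn hadj p1 p2 p3 hsep
end
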